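/- For n ≥ k ≥ 1, the n-th derivative at x = 0 of the function x ↦ (ln(1+x))^k / k! equals the signed Stirling number of the first kind s(n,k). -/

import Mathlib

open Real Finset

/-- Signed Stirling numbers of the first kind, via the recurrence
`s(n+1,k) = s(n,k-1) - n·s(n,k)`, with `s(0,0)=1`. -/
def stirlingFirst : ℕ → ℕ → ℤ
  | 0, 0 => 1
  | 0, _ + 1 => 0
  | _ + 1, 0 => 0
  | n + 1, k + 1 => stirlingFirst n k - n * stirlingFirst n (k + 1)

/-!
With `E k x = log (1 + x) ^ k / k!` one has `(1 + x) * (E (k + 1))' = E k` for `x > -1`.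
Differentiating `n` times by Leibniz, only two terms survive:
`(1 + x) * (E (k + 1))⁽ⁿ⁺¹⁾ + n * (E (k + 1))⁽ⁿ⁾ = (E k)⁽ⁿ⁾`.
At `x = 0` this is the recurrence defining `s(n, k)`, and `E k 0 = [k = 0]` gives the initial values.
-/

theorem iteratedDeriv_const_add_id {𝕜 : Type*} [NontriviallyNormedField 𝕜] (c x : 𝕜) (i : ℕ) :
    iteratedDeriv i (fun y => c + y) x = if i = 0 then c + x else if i = 1 then 1 else 0 := by
  rcases i with _ | i
  · simp
  · rw [iteratedDeriv_const_add i.succ_pos, iteratedDeriv_fun_id]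
    simp

theorem iteratedDeriv_const_add_mul_deriv {𝕜 : Type*} [NontriviallyNormedField 𝕜] {f : 𝕜 → 𝕜}
    {c x : 𝕜} {n : ℕ} (hf : ContDiffAt 𝕜 (n + 1) f x) :
    iteratedDeriv n (fun y => (c + y) * deriv f y) x =
      (c + x) * iteratedDeriv (n + 1) f x + n * iteratedDeriv n f x := by
  rcases n with _ | n
  · simp
  have hf' : ContDiffAt 𝕜 (n + 1) (deriv f) x := hf.derivWithin le_rfl
  rw [iteratedDeriv_fun_mul (by fun_prop) hf', sum_range_succ', sum_range_succ']
  simp [iteratedDeriv_const_add_id, iteratedDeriv_succ']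
  ring

noncomputable def stirlingFirstEGF (k : ℕ) (x : ℝ) : ℝ := log (1 + x) ^ k / k.factorial

theorem contDiffAt_stirlingFirstEGF (k : ℕ) {x : ℝ} (hx : -1 < x) :
    ContDiffAt ℝ ⊤ (stirlingFirstEGF k) x := by
  have : 1 + x ≠ 0 := by linarith
  unfold stirlingFirstEGF
  fun_prop (disch := assumption)

theorem hasDerivAt_stirlingFirstEGF_succ (k : ℕ) {x : ℝ} (hx : -1 < x) :
    HasDerivAt (stirlingFirstEGF (k + 1)) (stirlingFirstEGF k x / (1 + x)) x := by
  have hlog : HasDerivAt (fun y => log (1 + y)) (1 / (1 + x)) x := by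
    simpa using ((hasDerivAt_id' x).const_add 1).log (by linarith)
  refine ((hlog.fun_pow (k + 1)).div_const ((k + 1).factorial : ℝ)).congr_deriv ?_
  simp only [stirlingFirstEGF, Nat.factorial_succ, Nat.cast_mul, add_tsub_cancel_right]
  field_simp

theorem one_add_mul_iteratedDeriv_stirlingFirstEGF_succ (k n : ℕ) {x : ℝ} (hx : -1 < x) :
    (1 + x) * iteratedDeriv (n + 1) (stirlingFirstEGF (k + 1)) x
      + n * iteratedDeriv n (stirlingFirstEGF (k + 1)) x =
      iteratedDeriv n (stirlingFirstEGF k) x := by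
  have hode : (fun y => (1 + y) * deriv (stirlingFirstEGF (k + 1)) y) =ᶠ[nhds x]
      stirlingFirstEGF k := by
    filter_upwards [Ioi_mem_nhds hx] with y hy
    rw [(hasDerivAt_stirlingFirstEGF_succ k hy).deriv]
    field_simp [show 1 + y ≠ 0 by linarith [Set.mem_Ioi.mp hy]]
  rw [← hode.iteratedDeriv_eq, iteratedDeriv_const_add_mul_deriv
    ((contDiffAt_stirlingFirstEGF (k + 1) hx).of_le le_top)]

theorem iteratedDeriv_stirlingFirstEGF_zero (n k : ℕ) :
    iteratedDeriv n (stirlingFirstEGF k) 0 = stirlingFirst n k := by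
  induction n generalizing k with
  | zero => cases k <;> simp [stirlingFirstEGF, stirlingFirst]
  | succ n ih =>
    cases k with
    | zero =>
      have hconst : stirlingFirstEGF 0 = fun _ => 1 := by funext; simp [stirlingFirstEGF]
      simp [hconst, stirlingFirst, iteratedDeriv_const]
    | succ k =>
      have hrec := one_add_mul_iteratedDeriv_stirlingFirstEGF_succ k n (x := 0) (by norm_num)
      rw [ih, ih] at hrec
      simp only [stirlingFirst, Int.cast_sub, Int.cast_mul, Int.cast_natCast]
      linarith

theorem stmt_5_general (n k : ℕ) :
    iteratedDeriv n (fun x : ℝ => (Real.log (1 + x)) ^ k / (Nat.factorial k)) 0 =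
      (stirlingFirst n k : ℝ) :=
  iteratedDeriv_stirlingFirstEGF_zero n k

/-- (ln(1+x))ᵏ/k! is the exponential generating function of s(n,k). -/
theorem stmt_5 (n k : ℕ) (hk : 1 ≤ k) (hn : k ≤ n) :
    iteratedDeriv n (fun x : ℝ => (Real.log (1 + x)) ^ k / (Nat.factorial k)) 0 =
      (stirlingFirst n k : ℝ) :=
  stmt_5_general n k
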